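/- Let n ≥ 3, f ≥ 1, h ≥ 1, k ≥ 1 and s, m ≥ 0 be integers with m ≥ h + k. Then, with g = 0, p(n,s,m,f=,0=,h=,k=) = Σ_{y ∈ Y} w(f,0,h;y) · [ p(n−yf, s, m−y(h+k), f=, 0=, h=, min{m−y(h+k), k−1}≤) + p(n−yf, s, m−y(h+k), f=, 0=, min{m−y(h+k), h−1}≤, (m−y(h+k))≤) + p(n−yf, s, m−y(h+k), min{n−yf−1, f−1}≤, s≤, (m−y(h+k))≤, (m−y(h+k))≤) ]. (Paper's Lemma 2(vii).) -/

import Mathlib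

/-- Rooted tree-like multigraph (list-based representative): a root carrying a
self-loop count together with a list of children, each child being a pair of an
edge multiplicity (number of multiple edges, i.e. copies beyond the first, of the
edge joining the root to the child's root) and a rooted tree-like multigraph. -/
inductive PreRTM : Type where
  | node : ℕ → List (ℕ × PreRTM) → PreRTM

namespace PreRTM

/-- self-loop count of the root -/
def loops : PreRTM → ℕ
  | .node l _ => l

/-- the children of the root -/
def children : PreRTM → List (ℕ × PreRTM)
  | .node _ cs => cs

/-- number of vertices -/
def vcount : PreRTM → ℕ
  | .node _ cs => 1 + (cs.attach.map (fun c => vcount c.1.2)).sum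
decreasing_by
  rcases c with ⟨⟨e, Q⟩, hc⟩
  have h1 := List.sizeOf_lt_of_mem hc
  simp only [Prod.mk.sizeOf_spec, PreRTM.node.sizeOf_spec] at *
  omega

/-- total number of self-loops -/
def scount : PreRTM → ℕ
  | .node l cs => l + (cs.attach.map (fun c => scount c.1.2)).sum
decreasing_by
  rcases c with ⟨⟨e, Q⟩, hc⟩
  have h1 := List.sizeOf_lt_of_mem hc
  simp only [Prod.mk.sizeOf_spec, PreRTM.node.sizeOf_spec] at *
  omega

/-- total number of multiple edges -/
def ecount : PreRTM → ℕ
  | .node _ cs => (cs.attach.map (fun c => c.1.1 + ecount c.1.2)).sum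
decreasing_by
  rcases c with ⟨⟨e, Q⟩, hc⟩
  have h1 := List.sizeOf_lt_of_mem hc
  simp only [Prod.mk.sizeOf_spec, PreRTM.node.sizeOf_spec] at *
  omega

/-- Max_v: maximum number of vertices in a descendant subtree of the root (0 if none) -/
def maxV (P : PreRTM) : ℕ :=
  (P.children.map (fun c => c.2.vcount)).foldr max 0

/-- Max_s: maximum number of self-loops among descendant subtrees with `vcount = maxV` -/
def maxS (P : PreRTM) : ℕ :=
  (((P.children.filter (fun c => c.2.vcount == P.maxV)).map (fun c => c.2.scount)).foldr max 0)

/-- Max_m: maximum number of multiple edges among descendant subtrees with `vcount = maxV` -/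
def maxM (P : PreRTM) : ℕ :=
  (((P.children.filter (fun c => c.2.vcount == P.maxV)).map (fun c => c.2.ecount)).foldr max 0)

/-- Max_l: maximum multiplicity of the root edge among descendant subtrees with
`vcount = maxV` and `ecount = maxM` -/
def maxL (P : PreRTM) : ℕ :=
  (((P.children.filter (fun c => c.2.vcount == P.maxV && c.2.ecount == P.maxM)).map
      (fun c => c.1)).foldr max 0)

mutual
  /-- root-preserving isomorphism: equal root self-loop counts and equal multisets of children -/
  inductive REquiv : PreRTM → PreRTM → Prop where
    | node (l : ℕ) {cs cs' : List (ℕ × PreRTM)} :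
        LEquiv cs cs' → REquiv (.node l cs) (.node l cs')
  /-- lists of children agree as multisets, up to `REquiv` of the subtrees -/
  inductive LEquiv : List (ℕ × PreRTM) → List (ℕ × PreRTM) → Prop where
    | nil : LEquiv [] []
    | cons {e : ℕ} {P Q : PreRTM} {l₁ l₂ : List (ℕ × PreRTM)} :
        REquiv P Q → LEquiv l₁ l₂ → LEquiv ((e, P) :: l₁) ((e, Q) :: l₂)
    | swap (a b : ℕ × PreRTM) (l : List (ℕ × PreRTM)) : LEquiv (a :: b :: l) (b :: a :: l)
    | trans {l₁ l₂ l₃ : List (ℕ × PreRTM)} : LEquiv l₁ l₂ → LEquiv l₂ l₃ → LEquiv l₁ l₃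
end

end PreRTM

/-- Rooted tree-like multigraphs, up to root-preserving isomorphism. -/
def RTM : Type := Quot PreRTM.REquiv

/-- the isomorphism class of a representative -/
def cls (P : PreRTM) : RTM := Quot.mk PreRTM.REquiv P

namespace PreRTM

/-- `P` has `n` vertices, `s` self-loops and `m` multiple edges -/
def memP (n s m : ℤ) (P : PreRTM) : Prop :=
  (P.vcount : ℤ) = n ∧ (P.scount : ℤ) = s ∧ (P.ecount : ℤ) = m

/-- membership in 𝒫(n,s,m,f≤,g≤,h≤,k≤) -/
def memLLLL (n s m f g h k : ℤ) (P : PreRTM) : Prop :=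
  memP n s m P ∧ (P.maxV : ℤ) ≤ f ∧ (P.maxS : ℤ) ≤ g ∧ (P.maxM : ℤ) ≤ h ∧ (P.maxL : ℤ) ≤ k

/-- membership in 𝒫(n,s,m,f=,g≤,h≤,k≤) -/
def memELLL (n s m f g h k : ℤ) (P : PreRTM) : Prop :=
  memLLLL n s m f g h k P ∧ (P.maxV : ℤ) = f

/-- membership in 𝒫(n,s,m,f=,g=,h≤,k≤) -/
def memEELL (n s m f g h k : ℤ) (P : PreRTM) : Prop :=
  memELLL n s m f g h k P ∧ (P.maxS : ℤ) = g

/-- membership in 𝒫(n,s,m,f=,g=,h=,k≤) -/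
def memEEEL (n s m f g h k : ℤ) (P : PreRTM) : Prop :=
  memEELL n s m f g h k P ∧ (P.maxM : ℤ) = h

/-- membership in 𝒫(n,s,m,f=,g=,h=,k=) -/
def memEEEE (n s m f g h k : ℤ) (P : PreRTM) : Prop :=
  memEEEL n s m f g h k P ∧ (P.maxL : ℤ) = k

end PreRTM

/-- the family 𝒫(n,s,m,f≤,g≤,h≤,k≤) of isomorphism classes -/
def famLLLL (n s m f g h k : ℤ) : Set RTM := cls '' {P | P.memLLLL n s m f g h k}
/-- the family 𝒫(n,s,m,f=,g≤,h≤,k≤) of isomorphism classes -/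
def famELLL (n s m f g h k : ℤ) : Set RTM := cls '' {P | P.memELLL n s m f g h k}
/-- the family 𝒫(n,s,m,f=,g=,h≤,k≤) of isomorphism classes -/
def famEELL (n s m f g h k : ℤ) : Set RTM := cls '' {P | P.memEELL n s m f g h k}
/-- the family 𝒫(n,s,m,f=,g=,h=,k≤) of isomorphism classes -/
def famEEEL (n s m f g h k : ℤ) : Set RTM := cls '' {P | P.memEEEL n s m f g h k}
/-- the family 𝒫(n,s,m,f=,g=,h=,k=) of isomorphism classes -/
def famEEEE (n s m f g h k : ℤ) : Set RTM := cls '' {P | P.memEEEE n s m f g h k}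

/-- p(n,s,m,f≤,g≤,h≤,k≤) -/
noncomputable def pLLLL (n s m f g h k : ℤ) : ℕ := (famLLLL n s m f g h k).ncard
/-- p(n,s,m,f=,g≤,h≤,k≤) -/
noncomputable def pELLL (n s m f g h k : ℤ) : ℕ := (famELLL n s m f g h k).ncard
/-- p(n,s,m,f=,g=,h≤,k≤) -/
noncomputable def pEELL (n s m f g h k : ℤ) : ℕ := (famEELL n s m f g h k).ncard
/-- p(n,s,m,f=,g=,h=,k≤) -/
noncomputable def pEEEL (n s m f g h k : ℤ) : ℕ := (famEEEL n s m f g h k).ncard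
/-- p(n,s,m,f=,g=,h=,k=) -/
noncomputable def pEEEE (n s m f g h k : ℤ) : ℕ := (famEEEE n s m f g h k).ncard

/-- w(f,g,h;z) = C(p(f,g,h,(f−1)≤,g≤,h≤,h≤) + z − 1, z) -/
noncomputable def w (f g h : ℤ) (z : ℕ) : ℕ :=
  (pLLLL f g h (f - 1) g h h + z - 1).choose z

/-- the index set Y : integers y with 1 ≤ y ≤ ⌊(n−1)/f⌋, additionally y ≤ ⌊s/g⌋ when g ≥ 1
and y ≤ ⌊m/(h+k)⌋ when h+k ≥ 1 -/
noncomputable def Yset (n s m f g h k : ℤ) : Finset ℤ :=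
  (Finset.Icc 1 ((n - 1) / f)).filter
    (fun y => (1 ≤ g → y ≤ s / g) ∧ (1 ≤ h + k → y ≤ m / (h + k)))

/-!
Call a child of the root *special* when it is joined by `k` multiple edges to a subtree from
𝒫(f,0,h). Every tree of 𝒫(n,s,m,f=,0=,h=,k=) has `y ≥ 1` special children, because a child
realising `Max_l = k` is one. Removing them leaves a residual tree `r` with `n − yf` vertices and
`m − y(h+k)` multiple edges; conversely, `y` trees of 𝒫(f,0,h) glued onto such an `r` give a tree
of the family exactly when every child of `r` satisfies the bounds that `Max_v ≤ f`, `Max_s ≤ 0`,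
`Max_m ≤ h`, `Max_l ≤ k − 1` impose on a single child (`ChildBounded`), with `k − 1` because `r`
has no special child. Split according to whether `Max_v(r) = f` and `Max_m(r) = h`,
these residual trees form the three families on the right, and the multisets of special subtrees
are counted by `w`.
-/

theorem Multiset.sum_map_eq_card_mul {α : Type*} {s : Multiset α} {g : α → ℕ} {a : ℕ}
    (h : ∀ x ∈ s, g x = a) : (s.map g).sum = Multiset.card s * a := by
  rw [Multiset.map_congr rfl h, Multiset.map_const', Multiset.sum_replicate, smul_eq_mul]

section MultisetsOfCard

variable {α : Type*}

theorem setOf_multiset_card_eq_eq_range (s : Finset α) (n : ℕ) :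
    {A : Multiset α | Multiset.card A = n ∧ ∀ a ∈ A, a ∈ s} =
      Set.range fun x : Sym s n => (x : Multiset s).map Subtype.val := by
  ext A
  constructor
  · rintro ⟨hA, hs⟩
    exact ⟨⟨A.attach.map fun a => ⟨a.1, hs a.1 a.2⟩, by simp [hA]⟩, by simp [Multiset.map_map]⟩
  · rintro ⟨x, rfl⟩
    refine ⟨by simp, fun a ha => ?_⟩
    obtain ⟨b, -, rfl⟩ := Multiset.mem_map.1 ha
    exact b.2

theorem Set.Finite.ncard_setOf_multiset_card_eq {s : Set α} (hs : s.Finite) (n : ℕ) :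
    {A : Multiset α | Multiset.card A = n ∧ ∀ a ∈ A, a ∈ s}.ncard = s.ncard.multichoose n := by
  classical
  have hrange := setOf_multiset_card_eq_eq_range hs.toFinset n
  simp only [Set.Finite.mem_toFinset] at hrange
  rw [hrange, Set.ncard_range_of_injective, Nat.card_eq_fintype_card,
    Sym.card_sym_eq_multichoose, Fintype.card_coe, Set.ncard_eq_toFinset_card _ hs]
  exact fun x y hxy => Sym.coe_injective (Multiset.map_injective Subtype.val_injective hxy)

theorem Set.Finite.setOf_multiset_card_le {s : Set α} (hs : s.Finite) (n : ℕ) :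
    {A : Multiset α | Multiset.card A ≤ n ∧ ∀ a ∈ A, a ∈ s}.Finite := by
  refine ((Set.finite_Iic n).biUnion
    (t := fun i => {A : Multiset α | Multiset.card A = i ∧ ∀ a ∈ A, a ∈ s}) fun i _ => ?_).subset
    fun A hA => Set.mem_biUnion hA.1 ⟨rfl, hA.2⟩
  have hrange := setOf_multiset_card_eq_eq_range hs.toFinset i
  simp only [Set.Finite.mem_toFinset] at hrange
  rw [hrange]
  exact Set.finite_range _

end MultisetsOfCard

theorem Set.Finite.ncard_eq_sum_ncard_fibers {α β : Type*} [DecidableEq β] {s : Set α}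
    (hs : s.Finite) {t : Finset β} {g : α → β} (hg : ∀ a ∈ s, g a ∈ t) :
    s.ncard = ∑ b ∈ t, {a | a ∈ s ∧ g a = b}.ncard := by
  rw [Set.ncard_eq_toFinset_card _ hs,
    Finset.card_eq_sum_card_fiberwise fun a ha => hg a (hs.mem_toFinset.1 ha)]
  refine Finset.sum_congr rfl fun b _ => ?_
  rw [← Set.ncard_coe_finset, Finset.coe_filter]
  simp

theorem mem_Yset_iff {n s m f h k y : ℤ} (hf : 0 < f) (hhk : 0 < h + k) :
    y ∈ Yset n s m f 0 h k ↔ 1 ≤ y ∧ y * f ≤ n - 1 ∧ y * (h + k) ≤ m := by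
  simp only [Yset, Finset.mem_filter, Finset.mem_Icc, Int.le_ediv_iff_mul_le hf,
    Int.le_ediv_iff_mul_le hhk]
  omega

namespace PreRTM

def childMultiset {α : Type*} (φ : PreRTM → α) (cs : List (ℕ × PreRTM)) : Multiset (ℕ × α) :=
  cs.map (Prod.map id φ)

theorem sum_map_childMultiset {α : Type*} (φ : PreRTM → α) (g : ℕ × α → ℕ)
    (cs : List (ℕ × PreRTM)) :
    ((childMultiset φ cs).map g).sum = (cs.map fun c => g (c.1, φ c.2)).sum := by
  simp only [childMultiset, Multiset.map_coe, List.map_map, Multiset.sum_coe]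
  rfl

theorem LEquiv.childMultiset_eq {α : Type*} {φ : PreRTM → α}
    (hφ : ∀ l {cs cs'}, LEquiv cs cs' → childMultiset φ cs = childMultiset φ cs' →
      φ (.node l cs) = φ (.node l cs'))
    {l₁ l₂ : List (ℕ × PreRTM)} (h : LEquiv l₁ l₂) : childMultiset φ l₁ = childMultiset φ l₂ := by
  refine LEquiv.rec (motive_1 := fun P Q _ => φ P = φ Q)
    (motive_2 := fun l₁ l₂ _ => childMultiset φ l₁ = childMultiset φ l₂) ?_ rfl ?_ ?_ ?_ h
  · exact fun l _ _ hL ih => hφ l hL ih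
  · intro e P Q l₁ l₂ _ _ ih₁ ih₂
    simp only [childMultiset, List.map_cons, ← Multiset.cons_coe] at ih₂ ⊢
    rw [ih₂, Prod.map_apply, Prod.map_apply, ih₁]
  · intro a b l
    simp only [childMultiset, List.map_cons, ← Multiset.cons_coe]
    exact Multiset.cons_swap _ _ _
  · exact fun _ _ ih₁ ih₂ => ih₁.trans ih₂

theorem REquiv.apply_eq {α : Type*} {φ : PreRTM → α}
    (hφ : ∀ l {cs cs'}, LEquiv cs cs' → childMultiset φ cs = childMultiset φ cs' →
      φ (.node l cs) = φ (.node l cs'))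
    {P Q : PreRTM} (h : REquiv P Q) : φ P = φ Q := by
  obtain ⟨l, hL⟩ := h
  exact hφ l hL (hL.childMultiset_eq hφ)

mutual
theorem REquiv.refl : ∀ P : PreRTM, REquiv P P
  | .node l cs => .node l (LEquiv.refl cs)
theorem LEquiv.refl : ∀ l : List (ℕ × PreRTM), LEquiv l l
  | [] => .nil
  | (_, P) :: t => .cons (REquiv.refl P) (LEquiv.refl t)
end

theorem REquiv.symm {P Q : PreRTM} (h : REquiv P Q) : REquiv Q P := by
  refine REquiv.rec (motive_1 := fun P Q _ => REquiv Q P)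
    (motive_2 := fun l₁ l₂ _ => LEquiv l₂ l₁) ?_ .nil ?_ ?_ ?_ h
  · exact fun l _ _ _ ih => .node l ih
  · exact fun _ _ ih₁ ih₂ => .cons ih₁ ih₂
  · exact fun a b l => .swap b a l
  · exact fun _ _ ih₁ ih₂ => .trans ih₂ ih₁

theorem REquiv.trans {P Q R : PreRTM} (h₁ : REquiv P Q) (h₂ : REquiv Q R) : REquiv P R := by
  obtain ⟨l, hL₁⟩ := h₁
  cases h₂ with | node _ hL₂ => exact .node l (hL₁.trans hL₂)

theorem LEquiv.of_perm {l₁ l₂ : List (ℕ × PreRTM)} (h : l₁.Perm l₂) : LEquiv l₁ l₂ := by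
  induction h with
  | nil => exact .nil
  | cons _ _ ih => exact .cons (REquiv.refl _) ih
  | swap => exact .swap _ _ _
  | trans _ _ ih₁ ih₂ => exact ih₁.trans ih₂

theorem vcount_node (l : ℕ) (cs : List (ℕ × PreRTM)) :
    vcount (.node l cs) = 1 + (cs.map fun c => c.2.vcount).sum := by
  rw [vcount, List.attach_map_val (l := cs) (f := fun c => c.2.vcount)]

theorem scount_node (l : ℕ) (cs : List (ℕ × PreRTM)) :
    scount (.node l cs) = l + (cs.map fun c => c.2.scount).sum := by
  rw [scount, List.attach_map_val (l := cs) (f := fun c => c.2.scount)]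

theorem ecount_node (l : ℕ) (cs : List (ℕ × PreRTM)) :
    ecount (.node l cs) = (cs.map fun c => c.1 + c.2.ecount).sum := by
  rw [ecount, List.attach_map_val (l := cs) (f := fun c => c.1 + c.2.ecount)]

end PreRTM

open PreRTM

theorem cls_eq_cls_iff {P Q : PreRTM} : cls P = cls Q ↔ REquiv P Q := by
  refine ⟨fun h => ?_, Quot.sound⟩
  have h' := Quot.eq.1 h
  rwa [Equivalence.eqvGen_eq ⟨REquiv.refl, REquiv.symm, REquiv.trans⟩] at h'

theorem PreRTM.LEquiv.of_childMultiset_cls_eq :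
    ∀ {l₁ l₂ : List (ℕ × PreRTM)}, childMultiset cls l₁ = childMultiset cls l₂ → LEquiv l₁ l₂
  | [], [], _ => .nil
  | [], _ :: _, h => absurd h.symm (by simp [childMultiset])
  | a :: t, l₂, h => by
    classical
    have ha : Prod.map id cls a ∈ l₂.map (Prod.map id cls) := by
      rw [← Multiset.mem_coe, ← childMultiset, ← h]
      simp [childMultiset]
    obtain ⟨b, hb, hba⟩ := List.mem_map.1 ha
    have hperm := List.perm_cons_erase hb
    have ht : childMultiset cls t = childMultiset cls (l₂.erase b) := by
      rw [childMultiset, childMultiset, ← Multiset.cons_inj_right (Prod.map id cls a),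
        Multiset.cons_coe, Multiset.cons_coe, ← List.map_cons, ← hba, ← List.map_cons,
        ← childMultiset, ← childMultiset, h]
      exact Quot.sound (hperm.map _)
    obtain ⟨e, P⟩ := a
    obtain ⟨e', Q⟩ := b
    simp only [Prod.map, id, Prod.mk.injEq] at hba
    obtain ⟨rfl, hQP⟩ := hba
    exact (LEquiv.cons (cls_eq_cls_iff.1 hQP.symm) (of_childMultiset_cls_eq ht)).trans
      (LEquiv.of_perm hperm.symm)

namespace RTM

def loops : RTM → ℕ := Quot.lift PreRTM.loops (by rintro _ _ ⟨l, _⟩; rfl)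

def children : RTM → Multiset (ℕ × RTM) :=
  Quot.lift (fun P => childMultiset cls P.children) (by
    rintro _ _ ⟨l, hL⟩
    exact hL.childMultiset_eq fun l _ _ hL _ => Quot.sound (.node l hL))

def vcount : RTM → ℕ :=
  Quot.lift PreRTM.vcount fun _ _ h => h.apply_eq fun _ _ _ _ hc => by
    simpa [vcount_node, sum_map_childMultiset] using congrArg (fun M => (M.map Prod.snd).sum) hc

def scount : RTM → ℕ :=
  Quot.lift PreRTM.scount fun _ _ h => h.apply_eq fun _ _ _ _ hc => by
    simpa [scount_node, sum_map_childMultiset] using congrArg (fun M => (M.map Prod.snd).sum) hc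

def ecount : RTM → ℕ :=
  Quot.lift PreRTM.ecount fun _ _ h => h.apply_eq fun _ _ _ _ hc => by
    simpa [ecount_node, sum_map_childMultiset] using
      congrArg (fun M => (M.map fun c => c.1 + c.2).sum) hc

def maxV (t : RTM) : ℕ := (t.children.map fun c => c.2.vcount).sup

def maxS (t : RTM) : ℕ :=
  ((t.children.filter fun c => c.2.vcount = t.maxV).map fun c => c.2.scount).sup

def maxM (t : RTM) : ℕ :=
  ((t.children.filter fun c => c.2.vcount = t.maxV).map fun c => c.2.ecount).sup

def maxL (t : RTM) : ℕ :=
  ((t.children.filter fun c => c.2.vcount = t.maxV ∧ c.2.ecount = t.maxM).map Prod.fst).sup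

noncomputable def mk (l : ℕ) (M : Multiset (ℕ × RTM)) : RTM :=
  cls (.node l (M.map fun c => (c.1, Quot.out c.2)).toList)

@[elab_as_elim]
theorem ind {p : RTM → Prop} (node : ∀ l cs, p (cls (.node l cs))) (t : RTM) : p t :=
  Quot.ind (fun ⟨l, cs⟩ => node l cs) t

@[simp] theorem vcount_cls (P : PreRTM) : (cls P).vcount = P.vcount := rfl

@[simp] theorem scount_cls (P : PreRTM) : (cls P).scount = P.scount := rfl

@[simp] theorem ecount_cls (P : PreRTM) : (cls P).ecount = P.ecount := rfl

@[simp] theorem children_cls (P : PreRTM) :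
    (cls P).children = childMultiset cls P.children := rfl

@[simp] theorem loops_mk (l : ℕ) (M : Multiset (ℕ × RTM)) : (mk l M).loops = l := rfl

@[simp] theorem children_mk (l : ℕ) (M : Multiset (ℕ × RTM)) : (mk l M).children = M := by
  change (((M.map fun c => (c.1, Quot.out c.2)).toList.map (Prod.map id cls) : List _) :
    Multiset _) = M
  rw [← Multiset.map_coe, Multiset.coe_toList, Multiset.map_map]
  conv_rhs => rw [← Multiset.map_id M]
  exact Multiset.map_congr rfl fun c _ => Prod.ext rfl (Quot.out_eq c.2)

theorem ext_iff {t u : RTM} : t = u ↔ t.loops = u.loops ∧ t.children = u.children := by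
  refine ⟨by rintro rfl; exact ⟨rfl, rfl⟩, fun ⟨hl, hc⟩ => ?_⟩
  induction t using RTM.ind with | node l cs => ?_
  induction u using RTM.ind with | node l' cs' => ?_
  obtain rfl : l = l' := hl
  exact Quot.sound (.node l (.of_childMultiset_cls_eq hc))

@[simp] theorem mk_loops_children (t : RTM) : mk t.loops t.children = t :=
  ext_iff.2 ⟨rfl, children_mk _ _⟩

theorem vcount_eq (t : RTM) : t.vcount = 1 + (t.children.map fun c => c.2.vcount).sum := by
  induction t using RTM.ind with
  | node l cs => rw [children_cls, sum_map_childMultiset]; exact vcount_node l cs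

theorem scount_eq (t : RTM) : t.scount = t.loops + (t.children.map fun c => c.2.scount).sum := by
  induction t using RTM.ind with
  | node l cs => rw [children_cls, sum_map_childMultiset]; exact scount_node l cs

theorem ecount_eq (t : RTM) : t.ecount = (t.children.map fun c => c.1 + c.2.ecount).sum := by
  induction t using RTM.ind with
  | node l cs => rw [children_cls, sum_map_childMultiset]; exact ecount_node l cs

theorem sup_map_filter_childMultiset (cs : List (ℕ × PreRTM)) (p : ℕ × RTM → Prop)
    [DecidablePred p] (g : ℕ × RTM → ℕ) :
    (((childMultiset cls cs).filter p).map g).sup =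
      ((cs.filter fun c => p (c.1, cls c.2)).map fun c => g (c.1, cls c.2)).foldr max 0 := by
  rw [childMultiset, Multiset.filter_coe, Multiset.map_coe, Multiset.sup_coe, List.filter_map,
    List.map_map]
  rfl

theorem maxV_cls (P : PreRTM) : (cls P).maxV = P.maxV := by
  simpa [maxV, PreRTM.maxV] using
    sup_map_filter_childMultiset P.children (fun _ => True) fun c => c.2.vcount

theorem maxS_cls (P : PreRTM) : (cls P).maxS = P.maxS := by
  simpa [maxS, PreRTM.maxS, maxV_cls, beq_eq_decide] using
    sup_map_filter_childMultiset P.children (fun c => c.2.vcount = (cls P).maxV)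
      fun c => c.2.scount

theorem maxM_cls (P : PreRTM) : (cls P).maxM = P.maxM := by
  simpa [maxM, PreRTM.maxM, maxV_cls, beq_eq_decide] using
    sup_map_filter_childMultiset P.children (fun c => c.2.vcount = (cls P).maxV)
      fun c => c.2.ecount

theorem maxL_cls (P : PreRTM) : (cls P).maxL = P.maxL := by
  simpa [maxL, PreRTM.maxL, maxV_cls, maxM_cls, beq_eq_decide] using
    sup_map_filter_childMultiset P.children
      (fun c => c.2.vcount = (cls P).maxV ∧ c.2.ecount = (cls P).maxM) Prod.fst

theorem image_cls_setOf {p : PreRTM → Prop} {q : RTM → Prop} (h : ∀ P, q (cls P) ↔ p P) :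
    cls '' {P | p P} = {t | q t} := by
  ext t
  refine ⟨?_, fun ht => ⟨t.out, (h _).1 ?_, Quot.out_eq t⟩⟩
  · rintro ⟨P, hP, rfl⟩
    exact (h P).2 hP
  · rwa [show cls t.out = t from Quot.out_eq t]

section Families

variable {n s m f g h k : ℤ}

theorem famLLLL_eq : famLLLL n s m f g h k = {t |
    ((t.vcount : ℤ) = n ∧ (t.scount : ℤ) = s ∧ (t.ecount : ℤ) = m) ∧
      (t.maxV : ℤ) ≤ f ∧ (t.maxS : ℤ) ≤ g ∧ (t.maxM : ℤ) ≤ h ∧ (t.maxL : ℤ) ≤ k} := by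
  rw [famLLLL]
  refine image_cls_setOf fun P => ?_
  simp only [memLLLL, memP, vcount_cls, scount_cls, ecount_cls, maxV_cls, maxS_cls, maxM_cls,
    maxL_cls]

theorem famEELL_eq : famEELL n s m f g h k = {t |
    ((((t.vcount : ℤ) = n ∧ (t.scount : ℤ) = s ∧ (t.ecount : ℤ) = m) ∧
      (t.maxV : ℤ) ≤ f ∧ (t.maxS : ℤ) ≤ g ∧ (t.maxM : ℤ) ≤ h ∧ (t.maxL : ℤ) ≤ k) ∧
      (t.maxV : ℤ) = f) ∧ (t.maxS : ℤ) = g} := by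
  rw [famEELL]
  refine image_cls_setOf fun P => ?_
  simp only [memEELL, memELLL, memLLLL, memP, vcount_cls, scount_cls, ecount_cls, maxV_cls,
    maxS_cls, maxM_cls, maxL_cls]

theorem famEEEL_eq : famEEEL n s m f g h k = {t |
    (((((t.vcount : ℤ) = n ∧ (t.scount : ℤ) = s ∧ (t.ecount : ℤ) = m) ∧
      (t.maxV : ℤ) ≤ f ∧ (t.maxS : ℤ) ≤ g ∧ (t.maxM : ℤ) ≤ h ∧ (t.maxL : ℤ) ≤ k) ∧
      (t.maxV : ℤ) = f) ∧ (t.maxS : ℤ) = g) ∧ (t.maxM : ℤ) = h} := by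
  rw [famEEEL]
  refine image_cls_setOf fun P => ?_
  simp only [memEEEL, memEELL, memELLL, memLLLL, memP, vcount_cls, scount_cls, ecount_cls,
    maxV_cls, maxS_cls, maxM_cls, maxL_cls]

theorem famEEEE_eq : famEEEE n s m f g h k = {t |
    ((((((t.vcount : ℤ) = n ∧ (t.scount : ℤ) = s ∧ (t.ecount : ℤ) = m) ∧
      (t.maxV : ℤ) ≤ f ∧ (t.maxS : ℤ) ≤ g ∧ (t.maxM : ℤ) ≤ h ∧ (t.maxL : ℤ) ≤ k) ∧
      (t.maxV : ℤ) = f) ∧ (t.maxS : ℤ) = g) ∧ (t.maxM : ℤ) = h) ∧ (t.maxL : ℤ) = k} := by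
  rw [famEEEE]
  refine image_cls_setOf fun P => ?_
  simp only [memEEEE, memEEEL, memEELL, memELLL, memLLLL, memP, vcount_cls, scount_cls,
    ecount_cls, maxV_cls, maxS_cls, maxM_cls, maxL_cls]

end Families

section ChildInequalities

variable {t : RTM} {c : ℕ × RTM}

theorem vcount_lt_of_mem_children (hc : c ∈ t.children) : c.2.vcount < t.vcount := by
  rw [vcount_eq t]
  exact Nat.lt_one_add_iff.2
    (Multiset.le_sum_of_mem (Multiset.mem_map_of_mem (fun c : ℕ × RTM => c.2.vcount) hc))

theorem scount_le_of_mem_children (hc : c ∈ t.children) : c.2.scount ≤ t.scount := by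
  rw [scount_eq t]
  exact (Multiset.le_sum_of_mem
    (Multiset.mem_map_of_mem (fun c : ℕ × RTM => c.2.scount) hc)).trans (Nat.le_add_left _ _)

theorem fst_add_ecount_le_of_mem_children (hc : c ∈ t.children) :
    c.1 + c.2.ecount ≤ t.ecount := by
  rw [ecount_eq t]
  exact Multiset.le_sum_of_mem (Multiset.mem_map_of_mem (fun c : ℕ × RTM => c.1 + c.2.ecount) hc)

theorem vcount_le_maxV (hc : c ∈ t.children) : c.2.vcount ≤ t.maxV :=
  Multiset.le_sup (Multiset.mem_map_of_mem _ hc)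

theorem scount_le_maxS (hc : c ∈ t.children) (hv : c.2.vcount = t.maxV) :
    c.2.scount ≤ t.maxS :=
  Multiset.le_sup (Multiset.mem_map_of_mem _ (Multiset.mem_filter.2 ⟨hc, hv⟩))

theorem ecount_le_maxM (hc : c ∈ t.children) (hv : c.2.vcount = t.maxV) :
    c.2.ecount ≤ t.maxM :=
  Multiset.le_sup (Multiset.mem_map_of_mem _ (Multiset.mem_filter.2 ⟨hc, hv⟩))

theorem fst_le_maxL (hc : c ∈ t.children) (hv : c.2.vcount = t.maxV)
    (he : c.2.ecount = t.maxM) : c.1 ≤ t.maxL :=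
  Multiset.le_sup (Multiset.mem_map_of_mem _ (Multiset.mem_filter.2 ⟨hc, hv, he⟩))

end ChildInequalities

theorem maxV_lt_vcount (t : RTM) : t.maxV < t.vcount := by
  rw [vcount_eq t, Nat.lt_one_add_iff, maxV, Multiset.sup_le]
  exact fun _ hx => Multiset.le_sum_of_mem hx

theorem maxS_le_scount (t : RTM) : t.maxS ≤ t.scount :=
  Multiset.sup_le.2 fun _ hx => by
    obtain ⟨c, hc, rfl⟩ := Multiset.mem_map.1 hx
    exact scount_le_of_mem_children (Multiset.mem_of_mem_filter hc)

theorem maxM_le_ecount (t : RTM) : t.maxM ≤ t.ecount :=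
  Multiset.sup_le.2 fun _ hx => by
    obtain ⟨c, hc, rfl⟩ := Multiset.mem_map.1 hx
    exact (Nat.le_add_left _ _).trans
      (fst_add_ecount_le_of_mem_children (Multiset.mem_of_mem_filter hc))

theorem maxL_le_ecount (t : RTM) : t.maxL ≤ t.ecount :=
  Multiset.sup_le.2 fun _ hx => by
    obtain ⟨c, hc, rfl⟩ := Multiset.mem_map.1 hx
    exact (Nat.le_add_right _ _).trans
      (fst_add_ecount_le_of_mem_children (Multiset.mem_of_mem_filter hc))

theorem card_children_lt_vcount (t : RTM) : Multiset.card t.children < t.vcount := by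
  have hsum := Multiset.card_nsmul_le_sum (s := t.children.map fun c => c.2.vcount) (a := 1) <| by
    simp only [Multiset.mem_map]
    rintro _ ⟨c, -, rfl⟩
    exact (Nat.zero_le _).trans_lt c.2.maxV_lt_vcount
  rw [Multiset.card_map, smul_eq_mul, mul_one] at hsum
  rw [vcount_eq t]
  omega

def withCounts (n s m : ℕ) : Set RTM := {t | t.vcount = n ∧ t.scount = s ∧ t.ecount = m}

theorem finite_setOf_counts_le (n s m : ℕ) :
    {t : RTM | t.vcount ≤ n ∧ t.scount ≤ s ∧ t.ecount ≤ m}.Finite := by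
  induction n with
  | zero => exact Set.finite_empty.subset fun t ⟨hv, _⟩ => by have := t.maxV_lt_vcount; omega
  | succ n ih =>
    refine (((Set.finite_Iic s).prod (((Set.finite_Iic m).prod ih).setOf_multiset_card_le n)).image
      fun p => mk p.1 p.2).subset fun t ⟨hv, hs, he⟩ =>
        ⟨(t.loops, t.children), ⟨?_, ?_, fun c hc => ?_⟩, mk_loops_children t⟩
    · exact (Nat.le_add_right _ _).trans ((scount_eq t).symm ▸ hs)
    · exact Nat.lt_succ_iff.1 ((card_children_lt_vcount t).trans_le hv)
    · have := vcount_lt_of_mem_children hc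
      have := fst_add_ecount_le_of_mem_children hc
      exact ⟨Set.mem_Iic.2 (by omega), by omega, (scount_le_of_mem_children hc).trans hs, by omega⟩

theorem finite_withCounts (n s m : ℕ) : (withCounts n s m).Finite :=
  (finite_setOf_counts_le n s m).subset fun _ ⟨hv, hs, he⟩ => ⟨hv.le, hs.le, he.le⟩

theorem finite_setOf_counts_eq (n s m : ℤ) :
    {t : RTM | (t.vcount : ℤ) = n ∧ (t.scount : ℤ) = s ∧ (t.ecount : ℤ) = m}.Finite :=
  (finite_setOf_counts_le n.toNat s.toNat m.toNat).subset fun _ ⟨hv, hs, he⟩ =>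
    ⟨by omega, by omega, by omega⟩

theorem famLLLL_eq_withCounts (f g h : ℕ) : famLLLL f g h (f - 1) g h h = withCounts f g h := by
  ext t
  have := t.maxV_lt_vcount
  have := t.maxS_le_scount
  have := t.maxM_le_ecount
  have := t.maxL_le_ecount
  simp only [famLLLL_eq, withCounts, Set.mem_ofPred_eq]
  omega

def ChildBounded (f g h k : ℕ) (c : ℕ × RTM) : Prop :=
  c.2.vcount ≤ f ∧ (c.2.vcount = f → c.2.scount ≤ g ∧ c.2.ecount ≤ h ∧ (c.2.ecount = h → c.1 ≤ k))

section ChildBounded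

variable {f g h k : ℕ} {t : RTM}

theorem forall_childBounded_iff : (∀ c ∈ t.children, ChildBounded f g h k c) ↔
    t.maxV ≤ f ∧ (t.maxV = f → t.maxS ≤ g ∧ t.maxM ≤ h ∧ (t.maxM = h → t.maxL ≤ k)) := by
  constructor
  · intro hb
    refine ⟨Multiset.sup_le.2 ?_, fun hV => ⟨Multiset.sup_le.2 ?_, Multiset.sup_le.2 ?_,
      fun hM => Multiset.sup_le.2 ?_⟩⟩ <;>
    simp only [Multiset.mem_map, Multiset.mem_filter] <;> rintro _ ⟨c, hc, rfl⟩
    · exact (hb c hc).1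
    · exact ((hb c hc.1).2 (hc.2.trans hV)).1
    · exact ((hb c hc.1).2 (hc.2.trans hV)).2.1
    · exact ((hb c hc.1).2 (hc.2.1.trans hV)).2.2 (hc.2.2.trans hM)
  · rintro ⟨hV, hSML⟩ c hc
    refine ⟨(vcount_le_maxV hc).trans hV, fun hcV => ?_⟩
    have hcV' : c.2.vcount = t.maxV := le_antisymm (vcount_le_maxV hc) (hcV ▸ hV)
    obtain ⟨hS, hM, hL⟩ := hSML (hcV' ▸ hcV)
    refine ⟨(scount_le_maxS hc hcV').trans hS, (ecount_le_maxM hc hcV').trans hM, fun hcM => ?_⟩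
    have hcM' : c.2.ecount = t.maxM := le_antisymm (ecount_le_maxM hc hcV') (hcM ▸ hM)
    exact (fst_le_maxL hc hcV' hcM').trans (hL (hcM' ▸ hcM))

/-- The child `(k, q)` attains all four maxima, so the equalities reduce to upper bounds. -/
theorem maxima_eq_iff_forall_childBounded {q : RTM} (hq : (k, q) ∈ t.children)
    (hqv : q.vcount = f) (hqs : q.scount = g) (hqe : q.ecount = h) :
    t.maxV = f ∧ t.maxS = g ∧ t.maxM = h ∧ t.maxL = k ↔
      ∀ c ∈ t.children, ChildBounded f g h k c := by
  rw [forall_childBounded_iff]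
  refine ⟨fun ⟨hV, hS, hM, hL⟩ => ⟨hV.le, fun _ => ⟨hS.le, hM.le, fun _ => hL.le⟩⟩,
    fun ⟨hV, hSML⟩ => ?_⟩
  have hV' : t.maxV = f := le_antisymm hV (hqv ▸ vcount_le_maxV hq)
  obtain ⟨hS, hM, hL⟩ := hSML hV'
  have hqV : q.vcount = t.maxV := hqv.trans hV'.symm
  have hM' : t.maxM = h := le_antisymm hM (hqe ▸ ecount_le_maxM hq hqV)
  exact ⟨hV', le_antisymm hS (hqs ▸ scount_le_maxS hq hqV), hM',
    le_antisymm (hL hM') (fst_le_maxL (c := (k, q)) hq hqV (hqe.trans hM'.symm))⟩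

end ChildBounded

def IsSpecial (f g h k : ℕ) (c : ℕ × RTM) : Prop := c.1 = k ∧ c.2 ∈ withCounts f g h

instance (f g h k : ℕ) : DecidablePred (IsSpecial f g h k) :=
  fun c => inferInstanceAs (Decidable (c.1 = k ∧ _ ∧ _ ∧ _))

noncomputable def glue (k : ℕ) (A : Multiset RTM) (r : RTM) : RTM :=
  mk r.loops (A.map (k, ·) + r.children)

def specials (f g h k : ℕ) (t : RTM) : Multiset RTM :=
  (t.children.filter (IsSpecial f g h k)).map Prod.snd

noncomputable def residual (f g h k : ℕ) (t : RTM) : RTM :=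
  mk t.loops (t.children.filter fun c => ¬IsSpecial f g h k c)

section Glue

variable {f g h k : ℕ} {A : Multiset RTM} {q r t : RTM}

theorem children_glue : (glue k A r).children = A.map (k, ·) + r.children := children_mk _ _

theorem glue_specials_residual : glue k (specials f g h k t) (residual f g h k t) = t := by
  refine ext_iff.2 ⟨rfl, ?_⟩
  rw [children_glue, residual, children_mk, specials, Multiset.map_map]
  conv_rhs => rw [← Multiset.filter_add_not (IsSpecial f g h k) t.children]
  congr 1
  conv_rhs => rw [← Multiset.map_id (t.children.filter _)]
  exact Multiset.map_congr rfl fun c hc => Prod.ext (Multiset.of_mem_filter hc).1.symm rfl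

theorem mem_withCounts_of_mem_specials (hq : q ∈ specials f g h k t) : q ∈ withCounts f g h := by
  obtain ⟨c, hc, rfl⟩ := Multiset.mem_map.1 hq
  exact (Multiset.of_mem_filter hc).2

theorem not_isSpecial_of_mem_residual {c : ℕ × RTM} (hc : c ∈ (residual f g h k t).children) :
    ¬IsSpecial f g h k c := by
  rw [residual, children_mk] at hc
  exact (Multiset.mem_filter.1 hc).2

theorem filter_children_glue (hA : ∀ q ∈ A, q ∈ withCounts f g h)
    (hr : ∀ c ∈ r.children, ¬IsSpecial f g h k c) :
    (glue k A r).children.filter (IsSpecial f g h k) = A.map (k, ·) ∧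
      (glue k A r).children.filter (fun c => ¬IsSpecial f g h k c) = r.children := by
  have hA' : ∀ c ∈ A.map (k, ·), IsSpecial f g h k c := by
    simp only [Multiset.forall_mem_map_iff]
    exact fun q hq => ⟨rfl, hA q hq⟩
  rw [children_glue, Multiset.filter_add, Multiset.filter_add, Multiset.filter_eq_self.2 hA',
    Multiset.filter_eq_nil.2 hr, Multiset.filter_eq_nil.2 fun c hc => not_not.2 (hA' c hc),
    Multiset.filter_eq_self.2 hr, add_zero, zero_add]
  exact ⟨rfl, rfl⟩

theorem specials_glue (hA : ∀ q ∈ A, q ∈ withCounts f g h)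
    (hr : ∀ c ∈ r.children, ¬IsSpecial f g h k c) : specials f g h k (glue k A r) = A := by
  rw [specials, (filter_children_glue hA hr).1, Multiset.map_map]
  exact Multiset.map_id' A

theorem residual_glue (hA : ∀ q ∈ A, q ∈ withCounts f g h)
    (hr : ∀ c ∈ r.children, ¬IsSpecial f g h k c) : residual f g h k (glue k A r) = r := by
  rw [residual, (filter_children_glue hA hr).2]
  exact mk_loops_children r

theorem vcount_glue (hA : ∀ q ∈ A, q ∈ withCounts f g h) :
    (glue k A r).vcount = Multiset.card A * f + r.vcount := by
  rw [vcount_eq, vcount_eq r, children_glue, Multiset.map_add, Multiset.sum_add, Multiset.map_map,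
    Multiset.sum_map_eq_card_mul (a := f) fun q hq => ?_]
  · omega
  · exact (hA q hq).1

theorem scount_glue (hA : ∀ q ∈ A, q ∈ withCounts f g h) :
    (glue k A r).scount = Multiset.card A * g + r.scount := by
  rw [scount_eq, scount_eq r, children_glue, Multiset.map_add, Multiset.sum_add, Multiset.map_map,
    Multiset.sum_map_eq_card_mul (a := g) fun q hq => ?_, glue, loops_mk]
  · omega
  · exact (hA q hq).2.1

theorem ecount_glue (hA : ∀ q ∈ A, q ∈ withCounts f g h) :
    (glue k A r).ecount = Multiset.card A * (h + k) + r.ecount := by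
  rw [ecount_eq, ecount_eq r, children_glue, Multiset.map_add, Multiset.sum_add, Multiset.map_map,
    Multiset.sum_map_eq_card_mul (a := h + k) fun q hq => ?_]
  exact (congrArg (k + ·) (hA q hq).2.2).trans (add_comm k h)

theorem glue_mem_famEEEE_iff (hA : ∀ q ∈ A, q ∈ withCounts f g h) (hA₀ : A ≠ 0) {n s m : ℤ} :
    glue k A r ∈ famEEEE n s m f g h k ↔
      ((r.vcount : ℤ) = n - Multiset.card A * f ∧ (r.scount : ℤ) = s - Multiset.card A * g ∧
        (r.ecount : ℤ) = m - Multiset.card A * (h + k)) ∧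
      ∀ c ∈ r.children, ChildBounded f g h k c := by
  obtain ⟨q, hq⟩ := Multiset.exists_mem_of_ne_zero hA₀
  have hmax := maxima_eq_iff_forall_childBounded (t := glue k A r)
    (by rw [children_glue]; exact Multiset.mem_add.2 (.inl (Multiset.mem_map_of_mem _ hq)))
    (hA q hq).1 (hA q hq).2.1 (hA q hq).2.2
  have hA_bounded : ∀ c ∈ A.map (k, ·), ChildBounded f g h k c := by
    simp only [Multiset.forall_mem_map_iff]
    exact fun q hq =>
      ⟨(hA q hq).1.le, fun _ => ⟨(hA q hq).2.1.le, (hA q hq).2.2.le, fun _ => le_rfl⟩⟩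
  rw [children_glue] at hmax
  simp only [Multiset.mem_add, or_imp, forall_and, iff_true_intro hA_bounded, true_and] at hmax
  rw [famEEEE_eq, Set.mem_ofPred_eq, vcount_glue hA, scount_glue hA, ecount_glue hA, ← hmax]
  push_cast
  omega

end Glue

def residualFamily (f h k : ℕ) (n s m : ℤ) : Set RTM :=
  famEEEL n s m f 0 h (min m (k - 1)) ∪ famEELL n s m f 0 (min m (h - 1)) m ∪
    famLLLL n s m (min (n - 1) (f - 1)) s m m

section ResidualFamily

variable {f h k : ℕ} {n s m : ℤ} {A : Multiset RTM} {r t : RTM}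

theorem childBounded_sub_one_iff (hk : 1 ≤ k) {c : ℕ × RTM} :
    ChildBounded f 0 h (k - 1) c ↔ ChildBounded f 0 h k c ∧ ¬IsSpecial f 0 h k c := by
  simp only [ChildBounded, IsSpecial, withCounts, Set.mem_ofPred_eq]
  omega

theorem mem_residualFamily_iff (hk : 1 ≤ k) :
    r ∈ residualFamily f h k n s m ↔
      ((r.vcount : ℤ) = n ∧ (r.scount : ℤ) = s ∧ (r.ecount : ℤ) = m) ∧
        ∀ c ∈ r.children, ChildBounded f 0 h (k - 1) c := by
  rw [forall_childBounded_iff, residualFamily, famEEEL_eq, famEELL_eq, famLLLL_eq]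
  simp only [Set.mem_union, Set.mem_ofPred_eq]
  have := r.maxV_lt_vcount
  have := r.maxS_le_scount
  have := r.maxM_le_ecount
  have := r.maxL_le_ecount
  omega

theorem ncard_residualFamily :
    (residualFamily f h k n s m).ncard =
      (famEEEL n s m f 0 h (min m (k - 1))).ncard + (famEELL n s m f 0 (min m (h - 1)) m).ncard +
        (famLLLL n s m (min (n - 1) (f - 1)) s m m).ncard := by
  have hfin := finite_setOf_counts_eq n s m
  have h₁ : (famEEEL n s m f 0 h (min m (k - 1))).Finite :=
    hfin.subset fun t ht => by rw [famEEEL_eq] at ht; exact ht.1.1.1.1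
  have h₂ : (famEELL n s m f 0 (min m (h - 1)) m).Finite :=
    hfin.subset fun t ht => by rw [famEELL_eq] at ht; exact ht.1.1.1
  have h₃ : (famLLLL n s m (min (n - 1) (f - 1)) s m m).Finite :=
    hfin.subset fun t ht => by rw [famLLLL_eq] at ht; exact ht.1
  rw [residualFamily, Set.ncard_union_eq _ (h₁.union h₂) h₃, Set.ncard_union_eq _ h₁ h₂] <;>
  rw [Set.disjoint_left] <;>
  simp only [famEEEL_eq, famEELL_eq, famLLLL_eq, Set.mem_union, Set.mem_ofPred_eq] <;>
  omega

theorem not_isSpecial_of_mem_residualFamily (hk : 1 ≤ k) (hr : r ∈ residualFamily f h k n s m) :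
    ∀ c ∈ r.children, ¬IsSpecial f 0 h k c :=
  fun c hc => ((childBounded_sub_one_iff hk).1 (((mem_residualFamily_iff hk).1 hr).2 c hc)).2

theorem glue_mem_famEEEE_iff_mem_residualFamily (hk : 1 ≤ k)
    (hA : ∀ q ∈ A, q ∈ withCounts f 0 h) (hA₀ : A ≠ 0)
    (hr : ∀ c ∈ r.children, ¬IsSpecial f 0 h k c) :
    glue k A r ∈ famEEEE n s m f 0 h k ↔
      r ∈ residualFamily f h k (n - Multiset.card A * f) s (m - Multiset.card A * (h + k)) := by
  have hglue := glue_mem_famEEEE_iff (k := k) (n := n) (s := s) (m := m) (r := r) hA hA₀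
  simp only [Nat.cast_zero, mul_zero, sub_zero] at hglue
  rw [hglue, mem_residualFamily_iff hk]
  refine and_congr_right fun _ => forall₂_congr fun c hc => ?_
  rw [childBounded_sub_one_iff hk, iff_self_and]
  exact fun _ => hr c hc

theorem specials_ne_zero (hk : 1 ≤ k) (ht : t ∈ famEEEE n s m f 0 h k) :
    specials f 0 h k t ≠ 0 := by
  intro h0
  have hns : ∀ c ∈ t.children, ¬IsSpecial f 0 h k c := fun c hc hs => by
    have := Multiset.mem_map_of_mem Prod.snd (Multiset.mem_filter.2 ⟨hc, hs⟩)
    rw [← specials, h0] at this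
    exact Multiset.notMem_zero _ this
  rw [famEEEE_eq, Set.mem_ofPred_eq] at ht
  have hb : ∀ c ∈ t.children, ChildBounded f 0 h k c :=
    forall_childBounded_iff.2 ⟨by omega, fun _ => ⟨by omega, by omega, fun _ => by omega⟩⟩
  have := forall_childBounded_iff.1 fun c hc => (childBounded_sub_one_iff hk).2 ⟨hb c hc, hns c hc⟩
  omega

theorem card_specials_mem_Yset (hf : 1 ≤ f) (hk : 1 ≤ k) (ht : t ∈ famEEEE n s m f 0 h k) :
    (Multiset.card (specials f 0 h k t) : ℤ) ∈ Yset n s m f 0 h k := by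
  have hA₀ := specials_ne_zero hk ht
  rw [← glue_specials_residual (t := t), glue_mem_famEEEE_iff_mem_residualFamily hk
    (fun _ => mem_withCounts_of_mem_specials) hA₀ fun _ => not_isSpecial_of_mem_residual,
    mem_residualFamily_iff hk] at ht
  obtain ⟨⟨hv, -, he⟩, -⟩ := ht
  have := (residual f 0 h k t).maxV_lt_vcount
  have := Multiset.card_pos.2 hA₀
  rw [mem_Yset_iff (by omega) (by omega)]
  omega

theorem ncard_setOf_card_specials_eq (hk : 1 ≤ k) {Y : ℕ} (hY : 1 ≤ Y) :
    {t | t ∈ famEEEE n s m f 0 h k ∧ Multiset.card (specials f 0 h k t) = Y}.ncard =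
      (withCounts f 0 h).ncard.multichoose Y *
        (residualFamily f h k (n - Y * f) s (m - Y * (h + k))).ncard := by
  have ne_zero_of_card {A : Multiset RTM} (hA : Multiset.card A = Y) : A ≠ 0 := by
    rintro rfl
    simp only [Multiset.card_zero] at hA
    omega
  rw [← (finite_withCounts f 0 h).ncard_setOf_multiset_card_eq Y, ← Set.ncard_prod]
  symm
  refine Set.ncard_congr (fun p _ => glue k p.1 p.2) ?_ ?_ ?_
  · rintro ⟨A, r⟩ ⟨⟨hAY, hA⟩, hr⟩
    have hr' := not_isSpecial_of_mem_residualFamily hk hr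
    refine ⟨(glue_mem_famEEEE_iff_mem_residualFamily hk hA (ne_zero_of_card hAY) hr').2 ?_, ?_⟩
    · rwa [hAY]
    · rw [specials_glue hA hr', hAY]
  · rintro ⟨A, r⟩ ⟨A', r'⟩ ⟨⟨-, hA⟩, hr⟩ ⟨⟨-, hA'⟩, hr'⟩ hglue
    replace hr := not_isSpecial_of_mem_residualFamily hk hr
    replace hr' := not_isSpecial_of_mem_residualFamily hk hr'
    exact Prod.ext (by rw [← specials_glue hA hr, hglue, specials_glue hA' hr'])
      (by rw [← residual_glue hA hr, hglue, residual_glue hA' hr'])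
  · rintro t ⟨ht, hY⟩
    refine ⟨(specials f 0 h k t, residual f 0 h k t),
      ⟨⟨hY, fun _ => mem_withCounts_of_mem_specials⟩, ?_⟩, glue_specials_residual⟩
    rwa [← glue_specials_residual (t := t), glue_mem_famEEEE_iff_mem_residualFamily hk
      (fun _ => mem_withCounts_of_mem_specials) (ne_zero_of_card hY)
      fun _ => not_isSpecial_of_mem_residual, hY] at ht

end ResidualFamily

end RTM

/-- Paper's Lemma 2(vii): recursion for `p(n,s,m,f=,0=,h=,k=)` with `h, k ≥ 1`. -/
theorem lemma2_vii (n s m f h k : ℤ) (hn : 3 ≤ n) (hf : 1 ≤ f) (hh : 1 ≤ h) (hk : 1 ≤ k)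
    (hs : 0 ≤ s) (hm : 0 ≤ m) (hmhk : h + k ≤ m) :
    pEEEE n s m f 0 h k =
      ∑ y ∈ Yset n s m f 0 h k,
        w f 0 h y.toNat *
          (pEEEL (n - y*f) s (m - y*(h+k)) f 0 h (min (m - y*(h+k)) (k-1)) +
           pEELL (n - y*f) s (m - y*(h+k)) f 0 (min (m - y*(h+k)) (h-1)) (m - y*(h+k)) +
           pLLLL (n - y*f) s (m - y*(h+k)) (min (n - y*f - 1) (f-1)) s (m - y*(h+k)) (m - y*(h+k))) := by
  lift f to ℕ using by omega
  lift h to ℕ using by omega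
  lift k to ℕ using by omega
  have hfin : (famEEEE n s m f 0 h k).Finite := (RTM.finite_setOf_counts_eq n s m).subset
    fun t ht => by rw [RTM.famEEEE_eq] at ht; exact ht.1.1.1.1.1
  rw [pEEEE, hfin.ncard_eq_sum_ncard_fibers fun t ht =>
    RTM.card_specials_mem_Yset (by omega) (by omega) ht]
  refine Finset.sum_congr rfl fun y hy => ?_
  obtain ⟨hy, -, -⟩ := (mem_Yset_iff (by omega) (by omega)).1 hy
  lift y to ℕ using by omega
  rw [Int.toNat_natCast, w, pLLLL, ← Nat.cast_zero, RTM.famLLLL_eq_withCounts, ← Nat.multichoose_eq,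
    Nat.cast_zero, pEEEL, pEELL, pLLLL, ← RTM.ncard_residualFamily,
    ← RTM.ncard_setOf_card_specials_eq (by omega) (by omega)]
  simp only [Nat.cast_inj]
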